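/- arXiv:0901.4376 — 6 statements merged into one kernel-verified Lean document; each statement's English description precedes it below -/
import Mathlib

section
/- Let R be a commutative ring and X1,X2,X3,Y1,Y2,Y3 ∈ R with X1+X2+X3+Y1+Y2+Y3 = 0. With Z1 = X1+Y2+Y3, Z2 = Y1+X2+Y3, Z3 = Y1+Y2+X3 and Q = (X1*Y1+X2*Y2−X3*Y3)^2 − 4*X1*Y1*X2*Y2, the following three identities hold: Q = (X1*X2+Y1*Y2−Z1*Z2)^2 − 4*X1*X2*Y1*Y2, Q = (X1*X3+Y1*Y3−Z1*Z3)^2 − 4*X1*X3*Y1*Y3, and Q = (X2*X3+Y2*Y3−Z2*Z3)^2 − 4*X2*X3*Y2*Y3. -/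
/-!
The quartic is `Q = λ(X1 Y1, X2 Y2, X3 Y3)` for the Källén form
`λ(a, b, c) = (a + b - c)² - 4ab`, which is symmetric in `a, b, c`. Hence the three identities
are the images of the single identity `λ(X1 X2, Y1 Y2, Z1 Z2) = λ(X1 Y1, X2 Y2, X3 Y3)` under
the index permutations `2 ↔ 3` and `1 ↔ 3`, which preserve Riemann's normalization; that one
identity is checked by eliminating `X3`.
-/

section Kallen

variable {R : Type*} [CommRing R]

def kallen (a b c : R) : R := a ^ 2 + b ^ 2 + c ^ 2 - 2 * a * b - 2 * b * c - 2 * c * a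

theorem kallen_eq_sq_sub (a b c : R) : kallen a b c = (a + b - c) ^ 2 - 4 * a * b := by
  unfold kallen; ring

theorem kallen_swap₂₃ (a b c : R) : kallen a c b = kallen a b c := by
  unfold kallen; ring

theorem kallen_swap₁₃ (a b c : R) : kallen c b a = kallen a b c := by
  unfold kallen; ring

theorem kallen_riemann {X1 X2 X3 Y1 Y2 Y3 : R} (hsum : X1 + X2 + X3 + Y1 + Y2 + Y3 = 0) :
    kallen (X1 * X2) (Y1 * Y2) ((X1 + Y2 + Y3) * (Y1 + X2 + Y3)) =
      kallen (X1 * Y1) (X2 * Y2) (X3 * Y3) := by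
  obtain rfl : X3 = -(X1 + X2 + Y1 + Y2 + Y3) := by linear_combination hsum
  unfold kallen; ring

end Kallen

/-- Riemann model identities: the pairs {X1 X2, Y1 Y2, Z1 Z2}, {X1 X3, Y1 Y3, Z1 Z3}
and {X2 X3, Y2 Y3, Z2 Z3} give the same quartic Q. -/
theorem riemann_model_identities_ZZ {R : Type*} [CommRing R]
    (X1 X2 X3 Y1 Y2 Y3 Z1 Z2 Z3 Q : R)
    (hsum : X1 + X2 + X3 + Y1 + Y2 + Y3 = 0)
    (hZ1 : Z1 = X1 + Y2 + Y3)
    (hZ2 : Z2 = Y1 + X2 + Y3)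
    (hZ3 : Z3 = Y1 + Y2 + X3)
    (hQ : Q = (X1 * Y1 + X2 * Y2 - X3 * Y3) ^ 2 - 4 * X1 * Y1 * X2 * Y2) :
    Q = (X1 * X2 + Y1 * Y2 - Z1 * Z2) ^ 2 - 4 * X1 * X2 * Y1 * Y2 ∧
    Q = (X1 * X3 + Y1 * Y3 - Z1 * Z3) ^ 2 - 4 * X1 * X3 * Y1 * Y3 ∧
    Q = (X2 * X3 + Y2 * Y3 - Z2 * Z3) ^ 2 - 4 * X2 * X3 * Y2 * Y3 := by
  have hQ_kallen : Q = kallen (X1 * Y1) (X2 * Y2) (X3 * Y3) := by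
    rw [hQ, kallen_eq_sq_sub]; ring
  subst hZ1 hZ2 hZ3
  refine ⟨?_, ?_, ?_⟩
  · rw [hQ_kallen, ← kallen_riemann hsum, kallen_eq_sq_sub]; ring
  · have hsum₂₃ : X1 + X3 + X2 + Y1 + Y3 + Y2 = 0 := by linear_combination hsum
    rw [hQ_kallen, ← kallen_swap₂₃ (X1 * Y1), ← kallen_riemann hsum₂₃, kallen_eq_sq_sub]; ring
  · have hsum₁₃ : X3 + X2 + X1 + Y3 + Y2 + Y1 = 0 := by linear_combination hsum
    rw [hQ_kallen, ← kallen_swap₁₃ (X1 * Y1), ← kallen_riemann hsum₁₃, kallen_eq_sq_sub]; ring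
end

section
/- Let R be a commutative ring and X1,X2,X3,Y1,Y2,Y3 ∈ R with X1+X2+X3+Y1+Y2+Y3 = 0. With W = X1+X2+X3, Z1 = X1+Y2+Y3, Z2 = Y1+X2+Y3, Z3 = Y1+Y2+X3 and Q = (X1*Y1+X2*Y2−X3*Y3)^2 − 4*X1*Y1*X2*Y2, the following three identities hold: Q = (X1*W+Y2*Z3−Y3*Z2)^2 − 4*X1*W*Y2*Z3, Q = (X2*W+Y1*Z3−Y3*Z1)^2 − 4*X2*W*Y1*Z3, and Q = (X3*W+Y1*Z2−Y2*Z1)^2 − 4*X3*W*Y1*Z2. -/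
/-!
`riemannQuartic X1 X2 X3 Y1 Y2 Y3` equals `a² + b² + c² - 2(ab + bc + ca)` with `a = X1 Y1`,
`b = X2 Y2`, `c = X3 Y3`, so it is invariant under permuting the three pairs `(Xi, Yi)`.
On the hyperplane `X1 + ⋯ + Y3 = 0` it is moreover invariant under the linear substitution
`(X1, X2, X3, Y1, Y2, Y3) ↦ (X1, Y2, Y3, W, Z3, Z2)`, which preserves that hyperplane; this is the
first identity, and the other two are its conjugates by permutations of the pairs.
-/

section

variable {R : Type*} [CommRing R]

def riemannQuartic (X1 X2 X3 Y1 Y2 Y3 : R) : R :=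
  (X1 * Y1 + X2 * Y2 - X3 * Y3) ^ 2 - 4 * X1 * Y1 * X2 * Y2

theorem riemannQuartic_swap (X1 X2 X3 Y1 Y2 Y3 : R) :
    riemannQuartic X2 X1 X3 Y2 Y1 Y3 = riemannQuartic X1 X2 X3 Y1 Y2 Y3 := by
  unfold riemannQuartic
  ring

theorem riemannQuartic_rotate (X1 X2 X3 Y1 Y2 Y3 : R) :
    riemannQuartic X3 X1 X2 Y3 Y1 Y2 = riemannQuartic X1 X2 X3 Y1 Y2 Y3 := by
  unfold riemannQuartic
  ring

theorem riemannQuartic_exchange {X1 X2 X3 Y1 Y2 Y3 W Z2 Z3 : R}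
    (hsum : X1 + X2 + X3 + Y1 + Y2 + Y3 = 0) (hW : W = X1 + X2 + X3)
    (hZ2 : Z2 = Y1 + X2 + Y3) (hZ3 : Z3 = Y1 + Y2 + X3) :
    riemannQuartic X1 X2 X3 Y1 Y2 Y3 = riemannQuartic X1 Y2 Y3 W Z3 Z2 := by
  obtain rfl : X3 = -(X1 + X2 + Y1 + Y2 + Y3) := by linear_combination hsum
  subst hW hZ2 hZ3
  unfold riemannQuartic
  ring

end

/-- Riemann model identities: the pairs {X1 W, Y2 Z3, Y3 Z2}, {X2 W, Y1 Z3, Y3 Z1}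
and {X3 W, Y1 Z2, Y2 Z1} give the same quartic Q. -/
theorem riemann_model_identities_XW {R : Type*} [CommRing R]
    (X1 X2 X3 Y1 Y2 Y3 W Z1 Z2 Z3 Q : R)
    (hsum : X1 + X2 + X3 + Y1 + Y2 + Y3 = 0)
    (hW : W = X1 + X2 + X3)
    (hZ1 : Z1 = X1 + Y2 + Y3)
    (hZ2 : Z2 = Y1 + X2 + Y3)
    (hZ3 : Z3 = Y1 + Y2 + X3)
    (hQ : Q = (X1 * Y1 + X2 * Y2 - X3 * Y3) ^ 2 - 4 * X1 * Y1 * X2 * Y2) :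
    Q = (X1 * W + Y2 * Z3 - Y3 * Z2) ^ 2 - 4 * X1 * W * Y2 * Z3 ∧
    Q = (X2 * W + Y1 * Z3 - Y3 * Z1) ^ 2 - 4 * X2 * W * Y1 * Z3 ∧
    Q = (X3 * W + Y1 * Z2 - Y2 * Z1) ^ 2 - 4 * X3 * W * Y1 * Z2 := by
  change Q = riemannQuartic X1 X2 X3 Y1 Y2 Y3 at hQ
  rw [hQ]
  refine ⟨riemannQuartic_exchange hsum hW hZ2 hZ3, ?_, ?_⟩
  · rw [← riemannQuartic_swap]
    exact riemannQuartic_exchange (by linear_combination hsum) (by rw [hW]; ring)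
      (by rw [hZ1]; ring) (by rw [hZ3]; ring)
  · rw [← riemannQuartic_rotate]
    exact riemannQuartic_exchange (by linear_combination hsum) (by rw [hW]; ring)
      (by rw [hZ1]; ring) (by rw [hZ2]; ring)
end

section
/- Let K be a field and let X1,X2,X3,Y1,Y2,Y3 be homogeneous polynomials of degree 1 in K[x,y,z] (MvPolynomial (Fin 3) K), and set Q = (X1*Y1+X2*Y2−X3*Y3)^2 − 4*X1*Y1*X2*Y2. If P ∈ K^3 is a common zero of X1, X2 and X3, then P is a singular point of the quartic Q = 0: Q vanishes at P and all three partial derivatives of Q vanish at P. Consequently, if the projective plane curve Q = 0 is non-singular, the three bitangent lines X1=0, X2=0, X3=0 do not pass through a common point of the projective plane (Proposition: three asyzygetic bitangent lines do not cross in a point). -/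
open MvPolynomial

/-! Q is L² − (X1·X2)(4·Y1·Y2) with L = X1Y1 + X2Y2 − X3Y3, a difference of two products of
polynomials vanishing at any common zero P of X1, X2, X3. By the Leibniz rule such a product
vanishes at P together with all its first partial derivatives, so P is a singular point. -/

namespace MvPolynomial

variable {σ R : Type*}

def IsSingularZero [CommSemiring R] (P : σ → R) (f : MvPolynomial σ R) : Prop :=
  eval P f = 0 ∧ ∀ i, eval P (pderiv i f) = 0

theorem isSingularZero_mul [CommSemiring R] {P : σ → R} {a b : MvPolynomial σ R}
    (ha : eval P a = 0) (hb : eval P b = 0) : IsSingularZero P (a * b) :=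
  ⟨by simp [ha], fun i => by simp [Derivation.leibniz, ha, hb]⟩

theorem IsSingularZero.sub [CommRing R] {P : σ → R} {f g : MvPolynomial σ R}
    (hf : IsSingularZero P f) (hg : IsSingularZero P g) : IsSingularZero P (f - g) :=
  ⟨by simp [hf.1, hg.1], fun i => by simp [hf.2 i, hg.2 i]⟩

end MvPolynomial

theorem asyzygetic_bitangents_not_concurrent_general {K : Type*} [Field K]
    (X1 X2 X3 Y1 Y2 Y3 : MvPolynomial (Fin 3) K)
    (Q : MvPolynomial (Fin 3) K)
    (hQ : Q = (X1 * Y1 + X2 * Y2 - X3 * Y3) ^ 2 - 4 * X1 * Y1 * X2 * Y2) :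
    (∀ P : Fin 3 → K, eval P X1 = 0 → eval P X2 = 0 → eval P X3 = 0 →
      eval P Q = 0 ∧ ∀ i : Fin 3, eval P (pderiv i Q) = 0) ∧
    ((∀ P : Fin 3 → K, P ≠ 0 → eval P Q = 0 →
        ∃ i : Fin 3, eval P (pderiv i Q) ≠ 0) →
      ∀ P : Fin 3 → K, P ≠ 0 →
        ¬(eval P X1 = 0 ∧ eval P X2 = 0 ∧ eval P X3 = 0)) := by
  have singular : ∀ P : Fin 3 → K, eval P X1 = 0 → eval P X2 = 0 → eval P X3 = 0 →
      IsSingularZero P Q := by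
    intro P h1 h2 h3
    have hL : eval P (X1 * Y1 + X2 * Y2 - X3 * Y3) = 0 := by simp [h1, h2, h3]
    have hsplit : Q = (X1 * Y1 + X2 * Y2 - X3 * Y3) * (X1 * Y1 + X2 * Y2 - X3 * Y3) -
        X1 * (X2 * (4 * Y1 * Y2)) := by rw [hQ]; ring
    rw [hsplit]
    exact (isSingularZero_mul hL hL).sub (isSingularZero_mul h1 (by simp [h2]))
  refine ⟨singular, fun hnonsing P hP ⟨h1, h2, h3⟩ => ?_⟩
  obtain ⟨hQP, hdQP⟩ := singular P h1 h2 h3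
  obtain ⟨i, hi⟩ := hnonsing P hP hQP
  exact hi (hdQP i)

/-- A common zero of the three bitangents X1, X2, X3 of the Riemann model
Q = (X1Y1 + X2Y2 - X3Y3)^2 - 4X1Y1X2Y2 is a singular point of the quartic Q = 0;
consequently, if Q = 0 is non-singular then three asyzygetic bitangent lines do
not cross in a point. -/
theorem asyzygetic_bitangents_not_concurrent {K : Type*} [Field K]
    (X1 X2 X3 Y1 Y2 Y3 : MvPolynomial (Fin 3) K)
    (hX1 : X1.IsHomogeneous 1) (hX2 : X2.IsHomogeneous 1) (hX3 : X3.IsHomogeneous 1)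
    (hY1 : Y1.IsHomogeneous 1) (hY2 : Y2.IsHomogeneous 1) (hY3 : Y3.IsHomogeneous 1)
    (Q : MvPolynomial (Fin 3) K)
    (hQ : Q = (X1 * Y1 + X2 * Y2 - X3 * Y3) ^ 2 - 4 * X1 * Y1 * X2 * Y2) :
    (∀ P : Fin 3 → K, eval P X1 = 0 → eval P X2 = 0 → eval P X3 = 0 →
      eval P Q = 0 ∧ ∀ i : Fin 3, eval P (pderiv i Q) = 0) ∧
    ((∀ P : Fin 3 → K, P ≠ 0 → eval P Q = 0 →
        ∃ i : Fin 3, eval P (pderiv i Q) ≠ 0) →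
      ∀ P : Fin 3 → K, P ≠ 0 →
        ¬(eval P X1 = 0 ∧ eval P X2 = 0 ∧ eval P X3 = 0)) :=
  asyzygetic_bitangents_not_concurrent_general X1 X2 X3 Y1 Y2 Y3 Q hQ
end

section
/- Let K be a field, let X1,Y1,X2,Y2,X3,Y3,X4,Y4 ∈ K^3 be coefficient vectors of linear forms on K^3, and let λ ∈ K. Assume the quadratic-form identity λ^2·ℓ_{X1}(v)·ℓ_{Y1}(v) + ℓ_{X2}(v)·ℓ_{Y2}(v) + λ·ℓ_{X3}(v)·ℓ_{Y3}(v) = ℓ_{X4}(v)·ℓ_{Y4}(v) holds for all v ∈ K^3. Then: λ·(X3 X1 X2)·(Y3 X1 X2) = (X4 X1 X2)·(Y4 X1 X2); λ·(X3 X1 Y2)·(Y3 X1 Y2) = (X4 X1 Y2)·(Y4 X1 Y2); λ·(X3 Y1 X2)·(Y3 Y1 X2) = (X4 Y1 X2)·(Y4 Y1 X2); and λ·(X3 Y1 Y2)·(Y3 Y1 Y2) = (X4 Y1 Y2)·(Y4 Y1 Y2). -/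
/-!
The vector `A ⨯₃ B` is the intersection point of the lines `ℓ_A = 0` and `ℓ_B = 0`, and
`ℓ_C (A ⨯₃ B) = (C A B)`. At the intersection of a line of the first conic with a line of the
second, both `ℓ_{X1} ℓ_{Y1}` and `ℓ_{X2} ℓ_{Y2}` vanish, so the pencil relation collapses to
`λ (X3 A B)(Y3 A B) = (X4 A B)(Y4 A B)`.
-/

open Matrix

/-- The determinant of the 3×3 matrix with rows A, B, C. -/
def det3 {K : Type*} [Field K] (A B C : Fin 3 → K) : K :=
  Matrix.det (Matrix.of ![A, B, C])

lemma dotProduct_cross_eq_det3 {K : Type*} [Field K] (C A B : Fin 3 → K) :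
    C ⬝ᵥ A ⨯₃ B = det3 C A B :=
  triple_product_eq_det C A B

lemma dotProduct_mul_dotProduct_cross_left_eq_zero {R : Type*} [CommRing R]
    {X Y A : Fin 3 → R} (hA : A = X ∨ A = Y) (B : Fin 3 → R) :
    (X ⬝ᵥ A ⨯₃ B) * (Y ⬝ᵥ A ⨯₃ B) = 0 := by
  rcases hA with rfl | rfl <;> simp [dot_self_cross]

lemma dotProduct_mul_dotProduct_cross_right_eq_zero {R : Type*} [CommRing R]
    {X Y B : Fin 3 → R} (A : Fin 3 → R) (hB : B = X ∨ B = Y) :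
    (X ⬝ᵥ A ⨯₃ B) * (Y ⬝ᵥ A ⨯₃ B) = 0 := by
  rcases hB with rfl | rfl <;> simp [dot_cross_self]

lemma pencil_eval_cross {K : Type*} [Field K]
    {X1 Y1 X2 Y2 X3 Y3 X4 Y4 : Fin 3 → K} {lam : K}
    (hpencil : ∀ v : Fin 3 → K,
      lam ^ 2 * ((X1 ⬝ᵥ v) * (Y1 ⬝ᵥ v)) + (X2 ⬝ᵥ v) * (Y2 ⬝ᵥ v)
        + lam * ((X3 ⬝ᵥ v) * (Y3 ⬝ᵥ v)) = (X4 ⬝ᵥ v) * (Y4 ⬝ᵥ v))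
    {A B : Fin 3 → K} (hA : A = X1 ∨ A = Y1) (hB : B = X2 ∨ B = Y2) :
    lam * (det3 X3 A B * det3 Y3 A B) = det3 X4 A B * det3 Y4 A B := by
  have h := hpencil (A ⨯₃ B)
  rw [dotProduct_mul_dotProduct_cross_left_eq_zero hA,
    dotProduct_mul_dotProduct_cross_right_eq_zero A hB] at h
  simpa only [mul_zero, zero_add, dotProduct_cross_eq_det3] using h

/-- Four pairs of lines forming degenerate conics in a pencil:
evaluating the pencil relation at the four intersection points yields
the determinant identities of the proof of Theorem 5.1. -/
theorem pencil_det_identities {K : Type*} [Field K]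
    (X1 Y1 X2 Y2 X3 Y3 X4 Y4 : Fin 3 → K) (lam : K)
    (hpencil : ∀ v : Fin 3 → K,
      lam ^ 2 * ((X1 ⬝ᵥ v) * (Y1 ⬝ᵥ v)) + (X2 ⬝ᵥ v) * (Y2 ⬝ᵥ v)
        + lam * ((X3 ⬝ᵥ v) * (Y3 ⬝ᵥ v)) = (X4 ⬝ᵥ v) * (Y4 ⬝ᵥ v)) :
    lam * (det3 X3 X1 X2 * det3 Y3 X1 X2) = det3 X4 X1 X2 * det3 Y4 X1 X2 ∧
    lam * (det3 X3 X1 Y2 * det3 Y3 X1 Y2) = det3 X4 X1 Y2 * det3 Y4 X1 Y2 ∧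
    lam * (det3 X3 Y1 X2 * det3 Y3 Y1 X2) = det3 X4 Y1 X2 * det3 Y4 Y1 X2 ∧
    lam * (det3 X3 Y1 Y2 * det3 Y3 Y1 Y2) = det3 X4 Y1 Y2 * det3 Y4 Y1 Y2 :=
  ⟨pencil_eval_cross hpencil (.inl rfl) (.inl rfl),
    pencil_eval_cross hpencil (.inl rfl) (.inr rfl),
    pencil_eval_cross hpencil (.inr rfl) (.inl rfl),
    pencil_eval_cross hpencil (.inr rfl) (.inr rfl)⟩
end

section
/- Let K be a field, let X1,Y1,X2,Y2,X3,Y3,X4,Y4 ∈ K^3 be coefficient vectors of linear forms on K^3, and let λ ∈ K. Assume the quadratic-form identity λ^2·ℓ_{X1}(v)·ℓ_{Y1}(v) + ℓ_{X2}(v)·ℓ_{Y2}(v) + λ·ℓ_{X3}(v)·ℓ_{Y3}(v) = ℓ_{X4}(v)·ℓ_{Y4}(v) for all v ∈ K^3. Then the following three equalities of products of determinants hold: (X3 X1 X2)(Y3 X1 X2)·(X4 X1 Y2)(Y4 X1 Y2) = (X4 X1 X2)(Y4 X1 X2)·(X3 X1 Y2)(Y3 X1 Y2); (X3 X1 X2)(Y3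 X1 X2)·(X4 X2 Y1)(Y4 X2 Y1) = (X4 X1 X2)(Y4 X1 X2)·(X3 X2 Y1)(Y3 X2 Y1); and (X3 X1 X2)(Y3 X1 X2)·(X4 Y1 Y2)(Y4 Y1 Y2) = (X4 X1 X2)(Y4 X1 X2)·(X3 Y1 Y2)(Y3 Y1 Y2). (This is the determinant identity of Theorem 5.1 on four pairs of bitangent lines in a common Steiner complex, written without denominators.) -/
/-!
Evaluate the pencil relation at the common point `A ⨯₃ B` of a line of the first pair and a
line of the second pair. There the terms `λ² ℓ_{X1} ℓ_{Y1}` and `ℓ_{X2} ℓ_{Y2}` vanish, leaving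
`λ (X3 A B)(Y3 A B) = (X4 A B)(Y4 A B)`. Comparing this relation for `(A, B) = (X1, X2)` with the
one for `(X1, Y2)`, `(X2, Y1)` or `(Y1, Y2)` eliminates `λ`.
-/

open Matrix

section Det3

variable {K : Type*} [Field K]

theorem det3_eq_dotProduct_cross (A B C : Fin 3 → K) : det3 A B C = A ⬝ᵥ B ⨯₃ C :=
  (triple_product_eq_det A B C).symm

@[simp]
theorem det3_self_left (A B : Fin 3 → K) : det3 A A B = 0 := by
  rw [det3_eq_dotProduct_cross, dot_self_cross]

@[simp]
theorem det3_self_right (A B : Fin 3 → K) : det3 B A B = 0 := by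
  rw [det3_eq_dotProduct_cross, dot_cross_self]

theorem pencil_relation_at_cross {X1 Y1 X2 Y2 X3 Y3 X4 Y4 : Fin 3 → K} {lam : K}
    (hpencil : ∀ v : Fin 3 → K,
      lam ^ 2 * ((X1 ⬝ᵥ v) * (Y1 ⬝ᵥ v)) + (X2 ⬝ᵥ v) * (Y2 ⬝ᵥ v)
        + lam * ((X3 ⬝ᵥ v) * (Y3 ⬝ᵥ v)) = (X4 ⬝ᵥ v) * (Y4 ⬝ᵥ v))
    {A B : Fin 3 → K} (h1 : det3 X1 A B * det3 Y1 A B = 0)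
    (h2 : det3 X2 A B * det3 Y2 A B = 0) :
    lam * (det3 X3 A B * det3 Y3 A B) = det3 X4 A B * det3 Y4 A B := by
  have h := hpencil (A ⨯₃ B)
  simp only [← det3_eq_dotProduct_cross] at h
  linear_combination h - lam ^ 2 * h1 - h2

end Det3

theorem mul_eq_mul_of_mul_eq_of_mul_eq {R : Type*} [CommRing R] {c a b a' b' : R}
    (h : c * a = b) (h' : c * a' = b') : a * b' = b * a' := by
  linear_combination a' * h - a * h'

/-- Theorem 5.1 (without denominators): for four pairs of bitangent lines in a
common Steiner complex (degenerate conics in a pencil), the indicated products of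
determinants of coefficient vectors agree. -/
theorem steiner_complex_det_identities {K : Type*} [Field K]
    (X1 Y1 X2 Y2 X3 Y3 X4 Y4 : Fin 3 → K) (lam : K)
    (hpencil : ∀ v : Fin 3 → K,
      lam ^ 2 * ((X1 ⬝ᵥ v) * (Y1 ⬝ᵥ v)) + (X2 ⬝ᵥ v) * (Y2 ⬝ᵥ v)
        + lam * ((X3 ⬝ᵥ v) * (Y3 ⬝ᵥ v)) = (X4 ⬝ᵥ v) * (Y4 ⬝ᵥ v)) :
    det3 X3 X1 X2 * det3 Y3 X1 X2 * (det3 X4 X1 Y2 * det3 Y4 X1 Y2) =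
      det3 X4 X1 X2 * det3 Y4 X1 X2 * (det3 X3 X1 Y2 * det3 Y3 X1 Y2) ∧
    det3 X3 X1 X2 * det3 Y3 X1 X2 * (det3 X4 X2 Y1 * det3 Y4 X2 Y1) =
      det3 X4 X1 X2 * det3 Y4 X1 X2 * (det3 X3 X2 Y1 * det3 Y3 X2 Y1) ∧
    det3 X3 X1 X2 * det3 Y3 X1 X2 * (det3 X4 Y1 Y2 * det3 Y4 Y1 Y2) =
      det3 X4 X1 X2 * det3 Y4 X1 X2 * (det3 X3 Y1 Y2 * det3 Y3 Y1 Y2) := by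
  have at_X1X2 := pencil_relation_at_cross (A := X1) (B := X2) hpencil (by simp) (by simp)
  have at_X1Y2 := pencil_relation_at_cross (A := X1) (B := Y2) hpencil (by simp) (by simp)
  have at_X2Y1 := pencil_relation_at_cross (A := X2) (B := Y1) hpencil (by simp) (by simp)
  have at_Y1Y2 := pencil_relation_at_cross (A := Y1) (B := Y2) hpencil (by simp) (by simp)
  exact ⟨mul_eq_mul_of_mul_eq_of_mul_eq at_X1X2 at_X1Y2,
    mul_eq_mul_of_mul_eq_of_mul_eq at_X1X2 at_X2Y1,
    mul_eq_mul_of_mul_eq_of_mul_eq at_X1X2 at_Y1Y2⟩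
end

section
/- Let K be a field and let X1,X2,X3,Y1,Y2,Y3 ∈ K^3 satisfy X1+X2+X3+Y1+Y2+Y3 = 0. Set X7 = X1+X2+X3 and Y7 = Y1+Y2+X3. Then the following two equalities of products of determinants hold: (X2 X3 X7)·(X1 Y3 Y7) = (X1 X3 X7)·(X2 Y3 Y7), and (Y2 X3 Y7)·(Y1 Y3 X7) = (Y1 X3 Y7)·(Y2 Y3 X7). (This is Theorem 5.2 of the paper, written without denominators: the relations between the bitangent pairs of syzygetic Steiner complexes, after the Riemann normalization of the equations of the lines.) -/
/-!
Adding to the third row a combination of the first two leaves a determinant unchanged, so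
`(X1 X3 X7) = (X1 X3 X2) = -(X2 X3 X1) = -(X2 X3 X7)`. By the syzygy `Y7 = -(X1 + X2 + Y3)`, and
in the same way `(X1 Y3 Y7) = -(X2 Y3 Y7)`: each factor on one side is minus a factor on the other.
Since also `X7 = -(Y1 + Y2 + Y3)`, the second identity is the first with `X1, X2, X7, Y7` replaced
by `Y1, Y2, Y7, X7`.
-/

open Matrix

section

variable {K : Type*} [Field K] (A B C D : Fin 3 → K)

lemma det3_add_right : det3 A B (C + D) = det3 A B C + det3 A B D := by
  simp only [det3, det_fin_three, of_apply, cons_val, Pi.add_apply]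
  ring

lemma det3_neg_right : det3 A B (-C) = -det3 A B C := by
  simp only [det3, det_fin_three, of_apply, cons_val, Pi.neg_apply]
  ring

lemma det3_self_left_right : det3 A B A = 0 := by
  simp only [det3, det_fin_three, of_apply, cons_val]
  ring

lemma det3_self_mid_right : det3 A B B = 0 := by
  simp only [det3, det_fin_three, of_apply, cons_val]
  ring

lemma det3_swap_left_right : det3 C B A = -det3 A B C := by
  simp only [det3, det_fin_three, of_apply, cons_val]
  ring

lemma det3_add_add_eq_neg : det3 A C (A + B + C) = -det3 B C (A + B + C) := by
  simp only [det3_add_right, det3_self_left_right, det3_self_mid_right, add_zero, zero_add]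
  exact det3_swap_left_right B C A

variable {A B C D} {P Q : Fin 3 → K}

lemma det3_mul_det3_eq_of_eq_add (hP : P = A + B + C) (hQ : Q = -(A + B + D)) :
    det3 B C P * det3 A D Q = det3 A C P * det3 B D Q := by
  subst hP hQ
  rw [det3_add_add_eq_neg A B C, det3_neg_right, det3_neg_right, det3_add_add_eq_neg A B D]
  ring

end

/-- Theorem 5.2 (without denominators): relations between the bitangent pairs of
syzygetic Steiner complexes after the Riemann normalization, with
X7 = X1 + X2 + X3 and Y7 = Y1 + Y2 + X3. -/
theorem syzygetic_steiner_det_identities {K : Type*} [Field K]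
    (X1 X2 X3 Y1 Y2 Y3 : Fin 3 → K)
    (hsum : X1 + X2 + X3 + Y1 + Y2 + Y3 = 0)
    (X7 Y7 : Fin 3 → K)
    (hX7 : X7 = X1 + X2 + X3)
    (hY7 : Y7 = Y1 + Y2 + X3) :
    det3 X2 X3 X7 * det3 X1 Y3 Y7 = det3 X1 X3 X7 * det3 X2 Y3 Y7 ∧
    det3 Y2 X3 Y7 * det3 Y1 Y3 X7 = det3 Y1 X3 Y7 * det3 Y2 Y3 X7 :=
  ⟨det3_mul_det3_eq_of_eq_add hX7 (by linear_combination hY7 + hsum),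
    det3_mul_det3_eq_of_eq_add hY7 (by linear_combination hX7 + hsum)⟩
end
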